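/- Let f, g ∈ FinStoch(m, m+n) be stochastic matrices and suppose that for every i ∈ m, the columns f(·,i) and g(·,i) are of the form (1/2)·(ι∘d)(·,i) + (1/2)·(ȷ∘f₀)(·,i) resp. with ι, ȷ the Kleisli liftings of the coproduct injections m → m+n ← n and d the identity (Dirac) matrix on m. If the convex hulls of the columns of (1/2)(ȷ∘f₀) + (1/2)(ι∘d) and of (1/2)(ȷ∘g₀) + (1/2)(ι∘d) are equal in D(m+n), then f₀ = g₀. -/

import Mathlib

/-! The Dirac tag makes column `i` the unique point of the hull of the columns that maximises
coordinate `i` of the `m`-part. Hence if column `i` of `f₀` lies in the hull of the columns of `g₀`,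
it equals column `i` of `g₀`, and the `n`-parts of the two columns give `f₀(·,i) = g₀(·,i)`. -/

/-- Stochastic matrix predicate: columns are probability vectors. -/
def StochMat {m n : ℕ} (f : Fin n → Fin m → ℝ) : Prop :=
  (∀ a i, 0 ≤ f a i) ∧ ∀ i, ∑ a, f a i = 1

/-- The `i`-th column of `(1/2)·(ι∘d) + (1/2)·(ȷ∘f₀)` in `D(m+n)`:
the first `m` coordinates carry the Dirac tag `(1/2)·δ_i`, the last `n`
coordinates carry `(1/2)·f₀(·,i)`. -/
noncomputable def tagCol {m n : ℕ} (f0 : Fin n → Fin m → ℝ) (i : Fin m) : Fin (m + n) → ℝ :=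
  fun a => Fin.addCases
    (fun i' : Fin m => if i' = i then (1 : ℝ)/2 else 0)
    (fun b : Fin n => (1/2) * f0 b i) a

section StrictlyExposed

variable {𝕜 E : Type*} [Field 𝕜] [LinearOrder 𝕜] [IsStrictOrderedRing 𝕜]
  [AddCommGroup E] [Module 𝕜 E]

theorem convex_setOf_lt_or_eq (φ : E →ₗ[𝕜] 𝕜) (p : E) :
    Convex 𝕜 {y | φ y < φ p ∨ y = p} := by
  refine convex_iff_forall_pos.2 fun x hx y hy a b ha hb hab => ?_
  obtain rfl : a = 1 - b := eq_sub_of_add_eq hab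
  rcases hx with hx | rfl <;> rcases hy with hy | rfl
  case inr.inr => exact Or.inr (by rw [← add_smul, hab, one_smul])
  all_goals
    left
    simp only [map_add, map_smul, smul_eq_mul]
    nlinarith

theorem eq_of_mem_convexHull_of_apply_lt {s : Set E} (φ : E →ₗ[𝕜] 𝕜) {p x : E}
    (hs : ∀ y ∈ s, y ≠ p → φ y < φ p) (hx : x ∈ convexHull 𝕜 s) (hφx : φ p ≤ φ x) : x = p := by
  have hsub : s ⊆ {y | φ y < φ p ∨ y = p} := fun y hy => or_iff_not_imp_right.2 (hs y hy)
  obtain hlt | rfl := convexHull_min hsub (convex_setOf_lt_or_eq φ p) hx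
  · exact (hφx.not_gt hlt).elim
  · rfl

end StrictlyExposed

section TagCol

variable {m n : ℕ}

@[simp]
theorem tagCol_castAdd (f0 : Fin n → Fin m → ℝ) (i i' : Fin m) :
    tagCol f0 i (Fin.castAdd n i') = if i' = i then 1 / 2 else 0 := by
  simp [tagCol]

@[simp]
theorem tagCol_natAdd (f0 : Fin n → Fin m → ℝ) (i : Fin m) (b : Fin n) :
    tagCol f0 i (Fin.natAdd m b) = 1 / 2 * f0 b i := by
  simp [tagCol]

theorem tagCol_injective : Function.Injective (tagCol : (Fin n → Fin m → ℝ) → _) := by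
  intro f0 g0 h
  funext b i
  simpa using congrFun (congrFun h i) (Fin.natAdd m b)

theorem tagCol_eq_of_mem_convexHull {f0 g0 : Fin n → Fin m → ℝ} {i : Fin m}
    (hmem : tagCol f0 i ∈ convexHull ℝ (Set.range (tagCol g0))) : tagCol f0 i = tagCol g0 i := by
  refine eq_of_mem_convexHull_of_apply_lt (LinearMap.proj (Fin.castAdd n i)) ?_ hmem (by simp)
  rintro _ ⟨j, rfl⟩ hji
  simp [Ne.symm (ne_of_apply_ne (tagCol g0) hji)]

end TagCol

theorem tag_hull_injective_general {m n : ℕ} (f0 g0 : Fin n → Fin m → ℝ)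
    (hhull : convexHull ℝ (Set.range (tagCol f0))
        = convexHull ℝ (Set.range (tagCol g0))) :
    f0 = g0 := by
  refine tagCol_injective (funext fun i => tagCol_eq_of_mem_convexHull ?_)
  rw [← hhull]
  exact subset_convexHull ℝ _ ⟨i, rfl⟩

/-- Key lemma of the maximality theorem: mixing with the Dirac tag makes the
convex hull of the columns determine the stochastic matrix. -/
theorem tag_hull_injective {m n : ℕ} (f0 g0 : Fin n → Fin m → ℝ)
    (hf0 : StochMat f0) (hg0 : StochMat g0)
    (hhull : convexHull ℝ (Set.range (tagCol f0))
        = convexHull ℝ (Set.range (tagCol g0))) :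
    f0 = g0 :=
  tag_hull_injective_general f0 g0 hhull
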